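/- Let A and B be WAP-algebras. Then the direct sum A ⊕ B, with coordinatewise algebra operations and norm ‖(a,b)‖ = max(‖a‖, ‖b‖), is a WAP-algebra. -/

import Mathlib

noncomputable section
open Metric Set Function ContinuousLinearMap NormedSpace

section WAPDefs

variable (B : Type*) [NormedAddCommGroup B] [NormedSpace ℂ B]

/-- The set of weakly almost periodic functionals on a Banach space `B` equipped with a
continuous bilinear multiplication `m`: those `f` in the dual for which the orbit
`{f · a : ‖a‖ ≤ 1}` (where `(f · a)(b) = f (a * b)`) is relatively compact in the weak
topology `σ(B*, B**)` of the dual `B*`. -/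
def WAPset (m : B →L[ℂ] B →L[ℂ] B) : Set (StrongDual ℂ B) :=
  {f | IsCompact (closure
    ((fun a => toWeakSpace ℂ (StrongDual ℂ B) (f.comp (m a))) '' closedBall (0 : B) 1))}

/-- The WAP-seminorm `‖a‖_WAP = sup {|f a| : f ∈ WAP(B), ‖f‖ ≤ 1}`. -/
def wapNorm (m : B →L[ℂ] B →L[ℂ] B) (a : B) : ℝ :=
  sSup {r : ℝ | ∃ f ∈ WAPset B m, ‖f‖ ≤ 1 ∧ r = ‖f a‖}

/-- `B` (with multiplication `m`) is a WAP-algebra when the canonical map into `WAP(B)*`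
is bounded below, i.e. `sup {|f a| : f ∈ WAP(B), ‖f‖ ≤ 1} ≥ c ‖a‖` for some `c > 0`. -/
def IsWAPAlgebra (m : B →L[ℂ] B →L[ℂ] B) : Prop :=
  ∃ c > 0, ∀ a : B, c * ‖a‖ ≤ wapNorm B m a

/-- The canonical evaluation map from `B` into the dual of a subspace `X ⊆ B*`. -/
def dualEval (X : Submodule ℂ (StrongDual ℂ B)) (a : B) : StrongDual ℂ X :=
  (inclusionInDoubleDual ℂ B a).comp X.subtypeL

/-- `B` (with multiplication `m`) is a dual Banach algebra with predual `X`: `X` is a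
norm-closed subspace of `B*` which is a sub-bimodule for the actions `(f·b)(c) = f (b * c)`
and `(b·f)(c) = f (c * b)`, and the canonical evaluation map `B → X*` is an isometric
isomorphism. -/
structure IsDualBanachAlgebra (m : B →L[ℂ] B →L[ℂ] B)
    (X : Submodule ℂ (StrongDual ℂ B)) : Prop where
  closed : IsClosed (X : Set (StrongDual ℂ B))
  rmod : ∀ f ∈ X, ∀ b : B, f.comp (m b) ∈ X
  lmod : ∀ f ∈ X, ∀ b : B, f.comp (m.flip b) ∈ X
  isometric : ∀ b : B,
    @Norm.norm (X →L[ℂ] ℂ) (@ContinuousLinearMap.hasOpNorm ℂ ℂ X ℂ _ _ _ _ _ _ (RingHom.id ℂ))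
      (dualEval B X b) = ‖b‖
  surjective : Function.Surjective (dualEval B X)

end WAPDefs

/-! A coordinate projection of `A × B` is a multiplicative contraction, and pulling back a WAP
functional along such a map gives a WAP functional of no larger norm. Hence the WAP-seminorm
of `(a, b)` dominates those of `a` and of `b`, so `min c_A c_B` is a constant for `A × B`. -/

section Transfer

variable {C A : Type*} [NormedAddCommGroup C] [NormedSpace ℂ C]
  [NormedAddCommGroup A] [NormedSpace ℂ A]

lemma zero_mem_WAPset (m : A →L[ℂ] A →L[ℂ] A) : (0 : StrongDual ℂ A) ∈ WAPset A m := by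
  refine (isCompact_singleton (x := toWeakSpace ℂ (StrongDual ℂ A) 0)).closure.of_isClosed_subset
    isClosed_closure (closure_mono ?_)
  rintro _ ⟨a, -, rfl⟩
  simp

lemma bddAbove_wapNorm_set (m : A →L[ℂ] A →L[ℂ] A) (a : A) :
    BddAbove {r : ℝ | ∃ f ∈ WAPset A m, ‖f‖ ≤ 1 ∧ r = ‖f a‖} := by
  refine ⟨‖a‖, ?_⟩
  rintro _ ⟨f, -, hf, rfl⟩
  simpa using f.le_opNorm a |>.trans (mul_le_mul_of_nonneg_right hf (norm_nonneg a))

variable {mC : C →L[ℂ] C →L[ℂ] C} {mA : A →L[ℂ] A →L[ℂ] A} {π : C →L[ℂ] A}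

/-- `(f ∘ π) · p = (f · π p) ∘ π`, so the orbit of `f ∘ π` lies in the image of the orbit of `f`
under the weakly continuous map `g ↦ g ∘ π`. -/
lemma comp_mem_WAPset (hπ : ∀ p q, π (mC p q) = mA (π p) (π q)) (hπ1 : ‖π‖ ≤ 1)
    {f : StrongDual ℂ A} (hf : f ∈ WAPset A mA) : f.comp π ∈ WAPset C mC := by
  let T : StrongDual ℂ A →L[ℂ] StrongDual ℂ C := (compL ℂ C A ℂ).flip π
  refine (hf.image (WeakSpace.map T).continuous).closure.of_isClosed_subset isClosed_closure
    (closure_mono ?_)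
  rintro _ ⟨p, hp, rfl⟩
  have hπp : π p ∈ closedBall (0 : A) 1 := by
    rw [mem_closedBall_zero_iff] at hp ⊢
    exact (π.le_opNorm p).trans (mul_le_one₀ hπ1 (norm_nonneg p) hp)
  refine ⟨_, subset_closure ⟨π p, hπp, rfl⟩, ?_⟩
  exact congrArg (toWeakSpace ℂ (StrongDual ℂ C)) (ext fun q => congrArg f (hπ p q).symm)

lemma wapNorm_map_le (hπ : ∀ p q, π (mC p q) = mA (π p) (π q)) (hπ1 : ‖π‖ ≤ 1) (p : C) :
    wapNorm A mA (π p) ≤ wapNorm C mC p := by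
  refine csSup_le_csSup (bddAbove_wapNorm_set mC p) ⟨_, 0, zero_mem_WAPset mA, by simp, rfl⟩ ?_
  rintro _ ⟨f, hf, hf1, rfl⟩
  exact ⟨f.comp π, comp_mem_WAPset hπ hπ1 hf,
    (opNorm_comp_le f π).trans (mul_le_one₀ hf1 (norm_nonneg π) hπ1), rfl⟩

end Transfer

theorem isWAPAlgebra_prod_general {A : Type*} [NonUnitalNormedRing A] [NormedSpace ℂ A] [IsScalarTower ℂ A A] [SMulCommClass ℂ A A]
    {B : Type*} [NonUnitalNormedRing B] [NormedSpace ℂ B] [IsScalarTower ℂ B B] [SMulCommClass ℂ B B]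
    (hA : IsWAPAlgebra A (ContinuousLinearMap.mul ℂ A))
    (hB : IsWAPAlgebra B (ContinuousLinearMap.mul ℂ B)) :
    IsWAPAlgebra (A × B) (ContinuousLinearMap.mul ℂ (A × B)) := by
  obtain ⟨cA, hcA, hA⟩ := hA
  obtain ⟨cB, hcB, hB⟩ := hB
  refine ⟨min cA cB, lt_min hcA hcB, fun p => ?_⟩
  have hfst : cA * ‖p.1‖ ≤ wapNorm (A × B) (mul ℂ (A × B)) p :=
    (hA p.1).trans (wapNorm_map_le (π := fst ℂ A B) (fun _ _ => rfl) (norm_fst_le ..) p)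
  have hsnd : cB * ‖p.2‖ ≤ wapNorm (A × B) (mul ℂ (A × B)) p :=
    (hB p.2).trans (wapNorm_map_le (π := snd ℂ A B) (fun _ _ => rfl) (norm_snd_le ..) p)
  rw [Prod.norm_def, mul_max_of_nonneg _ _ (le_min hcA.le hcB.le)]
  exact max_le ((mul_le_mul_of_nonneg_right (min_le_left ..) (norm_nonneg _)).trans hfst)
    ((mul_le_mul_of_nonneg_right (min_le_right ..) (norm_nonneg _)).trans hsnd)

/-- The direct sum of two WAP-algebras (with coordinatewise operations and the max norm) is
a WAP-algebra. -/
theorem isWAPAlgebra_prod {A : Type*} [NonUnitalNormedRing A] [NormedSpace ℂ A] [IsScalarTower ℂ A A] [SMulCommClass ℂ A A] [CompleteSpace A]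
    {B : Type*} [NonUnitalNormedRing B] [NormedSpace ℂ B] [IsScalarTower ℂ B B] [SMulCommClass ℂ B B] [CompleteSpace B]
    (hA : IsWAPAlgebra A (ContinuousLinearMap.mul ℂ A))
    (hB : IsWAPAlgebra B (ContinuousLinearMap.mul ℂ B)) :
    IsWAPAlgebra (A × B) (ContinuousLinearMap.mul ℂ (A × B)) :=
  isWAPAlgebra_prod_general hA hB
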